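/- arXiv:2511.00692 — 3 statements merged into one kernel-verified Lean document; each statement's English description precedes it below -/
import Mathlib

section
/- Let d ≥ 1 and let P be a finite set of points in Euclidean d-space, and let k be an integer with 4 ≤ k ≤ |P|. Let K ⊆ P with |K| = k satisfy minDist(K) = disp(P,k), let a, b ∈ K be a closest pair of K, and set x = dist(a,b) > 0. Define P' = {p ∈ P : dist(p,a) ≥ x and dist(p,b) ≥ x}. If K' ⊆ P' is any (k−2)-element subset whose pairwise distances are all at least x, then a ∉ K', b ∉ K', the set S = {a,b} ∪ K' has exactly k elements, and minDist(S) = x = disp(P,k); in particular S is also an optimal k-dispersion subset of P. -/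
open scoped Classical

/-- The minimum inter-point distance of a finite point set (with at least two points,
the infimum is attained). -/
noncomputable def minDist {d : ℕ} (S : Finset (EuclideanSpace ℝ (Fin d))) : ℝ :=
  sInf {r : ℝ | ∃ p ∈ S, ∃ q ∈ S, p ≠ q ∧ r = dist p q}

/-- The `k`-dispersion value of a finite point set `P`: the maximum of `minDist S`
over all `k`-element subsets `S ⊆ P`. -/
noncomputable def disp {d : ℕ} (P : Finset (EuclideanSpace ℝ (Fin d))) (k : ℕ) : ℝ :=
  sSup {r : ℝ | ∃ S ⊆ P, S.card = k ∧ r = minDist S}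

theorem recombined_subset_is_optimal
    (d : ℕ) (hd : 1 ≤ d) (P : Finset (EuclideanSpace ℝ (Fin d))) (k : ℕ)
    (hk : 4 ≤ k) (hkP : k ≤ P.card)
    (K : Finset (EuclideanSpace ℝ (Fin d))) (hKP : K ⊆ P) (hKcard : K.card = k)
    (hKopt : minDist K = disp P k)
    (a b : EuclideanSpace ℝ (Fin d)) (ha : a ∈ K) (hb : b ∈ K) (hab : a ≠ b)
    (x : ℝ) (hx : x = dist a b) (hclosest : dist a b = minDist K) (hxpos : 0 < x)
    (P' : Finset (EuclideanSpace ℝ (Fin d)))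
    (hP' : P' = P.filter fun p => x ≤ dist p a ∧ x ≤ dist p b)
    (K' : Finset (EuclideanSpace ℝ (Fin d))) (hK'P' : K' ⊆ P')
    (hK'card : K'.card = k - 2)
    (hK'dist : ∀ p ∈ K', ∀ q ∈ K', p ≠ q → x ≤ dist p q) :
    a ∉ K' ∧ b ∉ K' ∧ ({a, b} ∪ K' : Finset (EuclideanSpace ℝ (Fin d))).card = k ∧
      minDist ({a, b} ∪ K' : Finset (EuclideanSpace ℝ (Fin d))) = x ∧ x = disp P k := by
  subst hP'
  have hmem : ∀ p ∈ K', x ≤ dist p a ∧ x ≤ dist p b := fun p hp =>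
    (Finset.mem_filter.mp (hK'P' hp)).2
  have haK' : a ∉ K' := by
    intro h
    have := (hmem a h).1
    simp [dist_self] at this
    linarith
  have hbK' : b ∉ K' := by
    intro h
    have := (hmem b h).2
    simp [dist_self] at this
    linarith
  have hdisj : Disjoint ({a, b} : Finset (EuclideanSpace ℝ (Fin d))) K' := by
    simp only [Finset.disjoint_left, Finset.mem_insert, Finset.mem_singleton]
    rintro p (rfl | rfl) <;> assumption
  have hcard : ({a, b} ∪ K' : Finset (EuclideanSpace ℝ (Fin d))).card = k := by
    rw [Finset.card_union_of_disjoint hdisj, Finset.card_insert_of_notMem (by simpa using hab),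
      Finset.card_singleton, hK'card]
    omega
  set S : Finset (EuclideanSpace ℝ (Fin d)) := {a, b} ∪ K' with hS
  have hmemS : ∀ p ∈ S, p = a ∨ p = b ∨ p ∈ K' := by
    intro p hp
    simpa [hS, Finset.mem_union, Finset.mem_insert] using hp
  have hlb : ∀ r ∈ {r : ℝ | ∃ p ∈ S, ∃ q ∈ S, p ≠ q ∧ r = dist p q}, x ≤ r := by
    rintro r ⟨p, hp, q, hq, hpq, rfl⟩
    rcases hmemS p hp with rfl | rfl | hpK <;> rcases hmemS q hq with rfl | rfl | hqK
    · exact absurd rfl hpq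
    · exact le_of_eq hx
    · rw [dist_comm]; exact (hmem q hqK).1
    · rw [dist_comm]; exact le_of_eq hx
    · exact absurd rfl hpq
    · rw [dist_comm]; exact (hmem q hqK).2
    · exact (hmem p hpK).1
    · exact (hmem p hpK).2
    · exact hK'dist p hpK q hqK hpq
  have hxmem : x ∈ {r : ℝ | ∃ p ∈ S, ∃ q ∈ S, p ≠ q ∧ r = dist p q} := by
    refine ⟨a, ?_, b, ?_, hab, hx⟩ <;> simp [hS]
  have hminS : minDist S = x := by
    unfold minDist
    exact le_antisymm (csInf_le ⟨x, hlb⟩ hxmem) (le_csInf ⟨x, hxmem⟩ hlb)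
  exact ⟨haK', hbK', hcard, hminS, by rw [hx, hclosest, hKopt]⟩
end

section
/- Let d ≥ 1 and let P be a finite set of (distinct) points in Euclidean d-space, and let k be an integer with 4 ≤ k ≤ |P|. For a ≠ b in P write P'_{a,b} = {p ∈ P : dist(p,a) ≥ dist(a,b) and dist(p,b) ≥ dist(a,b)}. Then disp(P,k) equals the maximum of dist(a,b) over all pairs a ≠ b in P for which there exists a (k−2)-element subset K' ⊆ P'_{a,b} with minDist(K') ≥ dist(a,b); moreover the set of such pairs is nonempty. (This identity expresses the correctness of the recursive dispersion algorithm.) -/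
open scoped Classical

/-- The pair `(a, b)` is "good" for the recursive algorithm: there is a `(k-2)`-element
subset of `P'_{a,b} = {p ∈ P : dist p a ≥ dist a b ∧ dist p b ≥ dist a b}` all of whose
pairwise distances are at least `dist a b`. -/
def GoodPair {d : ℕ} (P : Finset (EuclideanSpace ℝ (Fin d))) (k : ℕ)
    (a b : EuclideanSpace ℝ (Fin d)) : Prop :=
  ∃ K' ⊆ P.filter fun p => dist a b ≤ dist p a ∧ dist a b ≤ dist p b,
    K'.card = k - 2 ∧ dist a b ≤ minDist K'

/-!
Take an optimal `k`-subset `S` and a closest pair `a ≠ b` of it. Every other point of `S` is at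
distance at least `dist a b` from `a`, from `b` and from the rest of `S`, so `S \ {a, b}`
witnesses that `(a, b)` is a good pair with `dist a b = disp P k`. Conversely, if `K'`
witnesses that `(a, b)` is good, then `{a, b} ∪ K'` is a `k`-subset of `P` all of whose
pairwise distances are at least `dist a b`, so `dist a b ≤ disp P k`.
-/

open Finset

section

variable {d k : ℕ} {c : ℝ} {P S K : Finset (EuclideanSpace ℝ (Fin d))}
  {a b p q : EuclideanSpace ℝ (Fin d)}

lemma finite_distSet (S : Finset (EuclideanSpace ℝ (Fin d))) :
    {r : ℝ | ∃ p ∈ S, ∃ q ∈ S, p ≠ q ∧ r = dist p q}.Finite := by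
  refine ((S ×ˢ S).finite_toSet.image fun x => dist x.1 x.2).subset ?_
  rintro r ⟨p, hp, q, hq, -, rfl⟩
  exact ⟨(p, q), mem_product.mpr ⟨hp, hq⟩, rfl⟩

lemma exists_dist_eq_minDist (h : 2 ≤ #S) :
    ∃ p ∈ S, ∃ q ∈ S, p ≠ q ∧ minDist S = dist p q := by
  obtain ⟨p, hp, q, hq, hpq⟩ := one_lt_card.mp h
  have hne : {r : ℝ | ∃ p ∈ S, ∃ q ∈ S, p ≠ q ∧ r = dist p q}.Nonempty :=
    ⟨dist p q, p, hp, q, hq, hpq, rfl⟩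
  exact hne.csInf_mem (finite_distSet S)

lemma minDist_le_dist (hp : p ∈ S) (hq : q ∈ S) (hpq : p ≠ q) : minDist S ≤ dist p q :=
  csInf_le (finite_distSet S).bddBelow ⟨p, hp, q, hq, hpq, rfl⟩

lemma le_minDist (h : 2 ≤ #S) (H : (S : Set (EuclideanSpace ℝ (Fin d))).Pairwise
    fun p q => c ≤ dist p q) : c ≤ minDist S := by
  obtain ⟨p, hp, q, hq, hpq, hmin⟩ := exists_dist_eq_minDist h
  exact hmin ▸ H hp hq hpq

lemma finite_dispSet (P : Finset (EuclideanSpace ℝ (Fin d))) (k : ℕ) :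
    {r : ℝ | ∃ S ⊆ P, #S = k ∧ r = minDist S}.Finite := by
  refine (P.powerset.finite_toSet.image minDist).subset ?_
  rintro r ⟨S, hS, -, rfl⟩
  exact ⟨S, mem_powerset.mpr hS, rfl⟩

lemma exists_minDist_eq_disp (h : k ≤ #P) : ∃ S ⊆ P, #S = k ∧ disp P k = minDist S := by
  obtain ⟨S, hS, hcard⟩ := exists_subset_card_eq h
  have hne : {r : ℝ | ∃ S ⊆ P, #S = k ∧ r = minDist S}.Nonempty := ⟨minDist S, S, hS, hcard, rfl⟩
  exact hne.csSup_mem (finite_dispSet P k)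

lemma minDist_le_disp (hS : S ⊆ P) (hcard : #S = k) : minDist S ≤ disp P k :=
  le_csSup (finite_dispSet P k).bddAbove ⟨S, hS, hcard, rfl⟩

lemma goodPair_of_minDist_eq (hk : 4 ≤ k) (hSP : S ⊆ P) (hS : #S = k) (ha : a ∈ S)
    (hb : b ∈ S) (hab : a ≠ b) (hmin : minDist S = dist a b) : GoodPair P k a b := by
  have hK : (S.erase a).erase b ⊆ S := (erase_subset _ _).trans (erase_subset _ _)
  have hcard : #((S.erase a).erase b) = k - 2 := by
    rw [card_erase_of_mem (mem_erase.mpr ⟨hab.symm, hb⟩), card_erase_of_mem ha, hS]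
    omega
  refine ⟨(S.erase a).erase b, fun p hp => ?_, hcard, ?_⟩
  · have hpb : p ≠ b := (mem_erase.mp hp).1
    have hpa : p ≠ a := (mem_erase.mp (mem_of_mem_erase hp)).1
    exact mem_filter.mpr ⟨hSP (hK hp), hmin ▸ minDist_le_dist (hK hp) ha hpa,
      hmin ▸ minDist_le_dist (hK hp) hb hpb⟩
  · exact le_minDist (by omega) fun p hp q hq hpq => hmin ▸ minDist_le_dist (hK hp) (hK hq) hpq

lemma dist_le_disp_of_goodPair (hk : 2 ≤ k) (ha : a ∈ P) (hb : b ∈ P) (hab : a ≠ b)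
    (h : GoodPair P k a b) : dist a b ≤ disp P k := by
  obtain ⟨K, hKsub, hKcard, hKmin⟩ := h
  have hK : ∀ p ∈ K, p ∈ P ∧ dist a b ≤ dist p a ∧ dist a b ≤ dist p b :=
    fun p hp => mem_filter.mp (hKsub hp)
  have haK : a ∉ K := fun h => hab (by simpa using (hK a h).2.1)
  have hbK : b ∉ K := fun h => hab (by simpa using (hK b h).2.2)
  have hcard : #(insert a (insert b K)) = k := by
    rw [card_insert_of_notMem (by simp [hab, haK]), card_insert_of_notMem hbK, hKcard]
    omega
  have hsub : insert a (insert b K) ⊆ P := by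
    simpa [insert_subset_iff, ha, hb] using hKsub.trans (filter_subset _ P)
  have hpair : ((insert a (insert b K) : Finset _) : Set (EuclideanSpace ℝ (Fin d))).Pairwise
      fun p q => dist a b ≤ dist p q := by
    have hKpair : (K : Set (EuclideanSpace ℝ (Fin d))).Pairwise fun p q => dist a b ≤ dist p q :=
      fun p hp q hq hpq => hKmin.trans (minDist_le_dist hp hq hpq)
    rw [coe_insert, coe_insert]
    refine (hKpair.insert fun q hq _ => ?_).insert fun q hq _ => ?_
    · rw [dist_comm b q]; exact ⟨(hK q hq).2.2, (hK q hq).2.2⟩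
    · rcases hq with rfl | hq
      · rw [dist_comm q a]; exact ⟨le_rfl, le_rfl⟩
      · rw [dist_comm a q]; exact ⟨(hK q hq).2.1, (hK q hq).2.1⟩
  exact (le_minDist (by omega) hpair).trans (minDist_le_disp hsub hcard)

end

theorem recursive_algorithm_correctness_general
    (d : ℕ) (P : Finset (EuclideanSpace ℝ (Fin d))) (k : ℕ)
    (hk : 4 ≤ k) (hkP : k ≤ P.card) :
    (∃ a ∈ P, ∃ b ∈ P, a ≠ b ∧ GoodPair P k a b) ∧
      IsGreatest {r : ℝ | ∃ a ∈ P, ∃ b ∈ P, a ≠ b ∧ GoodPair P k a b ∧ r = dist a b}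
        (disp P k) := by
  obtain ⟨S, hSP, hS, hdisp⟩ := exists_minDist_eq_disp hkP
  obtain ⟨a, ha, b, hb, hab, hmin⟩ := exists_dist_eq_minDist (S := S) (by omega)
  have hgood := goodPair_of_minDist_eq hk hSP hS ha hb hab hmin
  refine ⟨⟨a, hSP ha, b, hSP hb, hab, hgood⟩,
    ⟨a, hSP ha, b, hSP hb, hab, hgood, hdisp.trans hmin⟩, ?_⟩
  rintro r ⟨a, ha, b, hb, hab, hgood, rfl⟩
  exact dist_le_disp_of_goodPair (by omega) ha hb hab hgood

theorem recursive_algorithm_correctness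
    (d : ℕ) (hd : 1 ≤ d) (P : Finset (EuclideanSpace ℝ (Fin d))) (k : ℕ)
    (hk : 4 ≤ k) (hkP : k ≤ P.card) :
    (∃ a ∈ P, ∃ b ∈ P, a ≠ b ∧ GoodPair P k a b) ∧
      IsGreatest {r : ℝ | ∃ a ∈ P, ∃ b ∈ P, a ≠ b ∧ GoodPair P k a b ∧ r = dist a b}
        (disp P k) :=
  recursive_algorithm_correctness_general d P k hk hkP
end

section
/- There exists N₀ such that the following holds for all integers n ≥ N₀. Let k be an integer with 3·10⁵ ≤ k ≤ n/(10⁵ · ln n), and let X₁, …, Xₙ be independent random points, each uniformly distributed in the unit square [0,1]² ⊆ ℝ². Then with probability at least 1 − 1/n there exist k indices i₁ < i₂ < … < i_k such that the points X_{i₁}, …, X_{i_k} are pairwise distinct and every two of them are at Euclidean distance at least 0.995^{3/2} · √3 · (4/27)^{1/4} / √k. -/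
/-!
The triangular lattice of spacing `s` has one point per area `(√3 / 2) s²`, so `k` of its points
fit into the unit square with spacing almost `(4/3)^{1/4} / √k ≈ 1.0746 / √k`; the constant of
the theorem is `0.995^{3/2}` times this. Take `k` such centres at spacing `1.073 / √k` and around
each the disc of radius `r = 0.0026 / √k`. A fixed disc misses all `n` points with probability
`(1 - π r²)^n ≤ n⁻²` as soon as `n π r² ≥ 2 log n`, which the bound `k ≤ n / (10⁵ log n)`
guarantees; by a union bound, with probability at least `1 - 1/n` every disc contains a point.
Choosing one point per disc gives `k` points pairwise more than `(1.073 - 2 · 0.0026) / √k`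
apart, and this exceeds the constant of the theorem.
-/

open Real MeasureTheory ENNReal

def unitSquare : Set (EuclideanSpace ℝ (Fin 2)) :=
  {p | ∀ j : Fin 2, p j ∈ Set.Icc (0 : ℝ) 1}

noncomputable def unifSquare : Measure (EuclideanSpace ℝ (Fin 2)) :=
  volume.restrict unitSquare

open Metric

lemma one_sub_le_measure_pi_forall_exists_mem {α β ι : Type*} [MeasurableSpace α] [Fintype ι]
    (μ : Measure α) [IsProbabilityMeasure μ] (C : Finset β) {B : β → Set α}
    (hB : ∀ c ∈ C, MeasurableSet (B c)) :
    1 - ∑ c ∈ C, (1 - μ (B c)) ^ Fintype.card ι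
      ≤ Measure.pi (fun _ : ι => μ) {X | ∀ c ∈ C, ∃ i, X i ∈ B c} := by
  set G := {X : ι → α | ∀ c ∈ C, ∃ i, X i ∈ B c}
  have hGc : Gᶜ = ⋃ c ∈ C, Set.univ.pi fun _ => (B c)ᶜ := by
    ext X
    simp [G]
  have hmiss : Measure.pi (fun _ : ι => μ) Gᶜ ≤ ∑ c ∈ C, (1 - μ (B c)) ^ Fintype.card ι := by
    rw [hGc]
    refine (measure_biUnion_finset_le C _).trans (Finset.sum_le_sum fun c hc => ?_)
    rw [Measure.pi_pi, prob_compl_eq_one_sub (hB c hc), Finset.prod_const, Finset.card_univ]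
  refine tsub_le_iff_right.mpr ((add_le_add_right hmiss _).trans' ?_)
  simpa using measure_univ_le_add_compl G (μ := Measure.pi fun _ : ι => μ)

lemma natCast_mul_one_sub_pow_le_inv {k n : ℕ} {v : ℝ} (hkn : k ≤ n) (hv : v ≤ 1)
    (hnv : 2 * Real.log n ≤ n * v) : k * (1 - v) ^ n ≤ 1 / n := by
  rcases Nat.eq_zero_or_pos n with rfl | hn
  · simp_all
  have hn' : (0 : ℝ) < n := by exact_mod_cast hn
  have hpow : (1 - v) ^ n ≤ ((n : ℝ) ^ 2)⁻¹ := calc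
    (1 - v) ^ n ≤ exp (-v) ^ n := pow_le_pow_left₀ (by linarith) (one_sub_le_exp_neg v) n
    _ = exp (-(n * v)) := by rw [← exp_nat_mul]; ring_nf
    _ ≤ exp (-(2 * Real.log n)) := exp_le_exp.mpr (by linarith)
    _ = ((n : ℝ) ^ 2)⁻¹ := by
      rw [exp_neg, ← Real.log_rpow hn', Real.rpow_two, Real.exp_log (by positivity)]
  calc (k : ℝ) * (1 - v) ^ n ≤ n * ((n : ℝ) ^ 2)⁻¹ :=
        mul_le_mul (by exact_mod_cast hkn) hpow (pow_nonneg (by linarith) n) hn'.le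
    _ = 1 / n := by field_simp

lemma exists_card_eq_pairwise_sub_lt_dist {α ι : Type*} [PseudoMetricSpace α]
    {C : Finset α} {s r : ℝ} (hC : (C : Set α).Pairwise fun c c' => s ≤ dist c c')
    (hrs : 2 * r ≤ s) {X : ι → α} (hX : ∀ c ∈ C, ∃ i, X i ∈ ball c r) :
    ∃ S : Finset ι, S.card = C.card ∧
      (S : Set ι).Pairwise fun i j => s - 2 * r < dist (X i) (X j) := by
  classical
  choose g hg using fun c : C => hX c c.2
  have hsep : ∀ c c' : C, c ≠ c' → s - 2 * r < dist (X (g c)) (X (g c')) := by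
    intro c c' hne
    have hcc' := hC c.2 c'.2 (Subtype.coe_ne_coe.mpr hne)
    have h₁ := mem_ball'.mp (hg c)
    have h₂ := mem_ball.mp (hg c')
    linarith [dist_triangle4 (c : α) (X (g c)) (X (g c')) c']
  have hinj : Function.Injective g := by
    intro c c' hgg
    by_contra hne
    have := hsep c c' hne
    rw [hgg, dist_self] at this
    linarith
  refine ⟨Finset.univ.image g, by rw [Finset.card_image_of_injective _ hinj]; simp, ?_⟩
  simp only [Finset.coe_image, Finset.coe_univ, Set.image_univ]
  rintro _ ⟨c, rfl⟩ _ ⟨c', rfl⟩ hne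
  exact hsep c c' (ne_of_apply_ne g hne)

lemma unitSquare_eq_preimage :
    unitSquare = WithLp.ofLp ⁻¹' Set.Icc (0 : Fin 2 → ℝ) 1 := by
  ext p
  simp [unitSquare, Pi.le_def, forall_and]

instance : IsProbabilityMeasure unifSquare := by
  constructor
  rw [unifSquare, Measure.restrict_apply_univ, unitSquare_eq_preimage,
    (PiLp.volume_preserving_ofLp (Fin 2)).measure_preimage measurableSet_Icc.nullMeasurableSet,
    Real.volume_Icc_pi]
  simp

lemma ball_subset_unitSquare {c : EuclideanSpace ℝ (Fin 2)} {r : ℝ}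
    (hc : ∀ j, c j ∈ Set.Icc r (1 - r)) : ball c r ⊆ unitSquare := by
  intro p hp j
  have := (PiLp.dist_apply_le p c j).trans_lt (mem_ball.mp hp)
  rw [Real.dist_eq, abs_lt] at this
  have := hc j
  simp only [Set.mem_Icc] at *
  constructor <;> linarith

lemma unifSquare_ball {c : EuclideanSpace ℝ (Fin 2)} {r : ℝ} (hr : 0 ≤ r)
    (hc : ∀ j, c j ∈ Set.Icc r (1 - r)) :
    unifSquare (ball c r) = .ofReal (π * r ^ 2) := by
  rw [unifSquare, Measure.restrict_eq_self _ (ball_subset_unitSquare hc),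
    EuclideanSpace.volume_ball_fin_two, ENNReal.ofReal_mul pi_nonneg, ENNReal.ofReal_pow hr,
    mul_comm]

lemma one_sub_inv_le_unifSquare_pi_forall_exists_mem_ball {n : ℕ}
    {C : Finset (EuclideanSpace ℝ (Fin 2))} {r : ℝ} (hr : 0 ≤ r)
    (hC : ∀ c ∈ C, ∀ j, c j ∈ Set.Icc r (1 - r)) (hCn : C.card ≤ n) (hr₁ : π * r ^ 2 ≤ 1)
    (hnr : 2 * Real.log n ≤ n * (π * r ^ 2)) :
    1 - 1 / (n : ℝ≥0∞) ≤
      (Measure.pi fun _ : Fin n => unifSquare) {X | ∀ c ∈ C, ∃ i, X i ∈ ball c r} := by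
  rcases Nat.eq_zero_or_pos n with rfl | hn
  · simp
  refine le_trans ?_ (one_sub_le_measure_pi_forall_exists_mem unifSquare C
    fun _ _ => measurableSet_ball)
  gcongr
  rw [Finset.sum_congr rfl fun c hc => by rw [unifSquare_ball hr (hC c hc)], Finset.sum_const,
    nsmul_eq_mul, Fintype.card_fin, ← ofReal_one, ← ofReal_sub _ (by positivity),
    ← ofReal_pow (by linarith), ← ofReal_natCast, ← ofReal_mul (by positivity),
    ← ofReal_natCast n, ← ofReal_div_of_pos (by exact_mod_cast hn)]
  exact ofReal_le_ofReal (natCast_mul_one_sub_pow_le_inv hCn hr₁ hnr)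

lemma four_le_sq_add_three_mul_sq {u v : ℤ} (huv : u ≡ v [ZMOD 2]) (hne : u ≠ 0 ∨ v ≠ 0) :
    4 ≤ u ^ 2 + 3 * v ^ 2 := by
  have one_le_sq : ∀ x : ℤ, x ≠ 0 → 1 ≤ x ^ 2 := fun x hx => by
    rcases (by omega : 1 ≤ x ∨ x ≤ -1) with h | h <;> nlinarith
  have four_le_sq : ∀ x : ℤ, 2 ∣ x → x ≠ 0 → 4 ≤ x ^ 2 := by
    rintro _ ⟨m, rfl⟩ hm
    nlinarith [one_le_sq m (by omega)]
  rw [Int.ModEq] at huv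
  by_cases hu : u = 0
  · nlinarith [four_le_sq v (by omega) (by omega)]
  by_cases hv : v = 0
  · nlinarith [four_le_sq u (by omega) hu]
  nlinarith [one_le_sq u hu, one_le_sq v hv]

/-- Point `p.2` of row `p.1` of the triangular lattice of spacing `s` with corner `(a, a)`, odd
rows shifted by `s / 2`. In the coordinates `u = 2 p.2 + p.1 % 2 ≡ v = p.1 (mod 2)` squared
distances are `(s / 2)² (Δu² + 3 Δv²)`. -/
noncomputable def hexPoint (a s : ℝ) (p : ℕ × ℕ) : EuclideanSpace ℝ (Fin 2) :=
  !₂[a + s / 2 * (2 * p.2 + p.1 % 2 : ℕ), a + s / 2 * √3 * p.1]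

lemma le_dist_hexPoint (a : ℝ) {s : ℝ} (hs : 0 ≤ s) {p q : ℕ × ℕ} (hpq : p ≠ q) :
    s ≤ dist (hexPoint a s p) (hexPoint a s q) := by
  have h4 : (4 : ℝ) ≤ (((2 * p.2 + p.1 % 2 : ℕ) : ℝ) - (2 * q.2 + q.1 % 2 : ℕ)) ^ 2
      + 3 * ((p.1 : ℝ) - q.1) ^ 2 := by
    have := four_le_sq_add_three_mul_sq
      (u := ((2 * p.2 + p.1 % 2 : ℕ) : ℤ) - (2 * q.2 + q.1 % 2 : ℕ)) (v := (p.1 : ℤ) - q.1)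
      (by rw [Int.ModEq]; omega) (by rw [Ne, Prod.ext_iff] at hpq; omega)
    exact_mod_cast this
  rw [EuclideanSpace.dist_eq, Fin.sum_univ_two, Real.le_sqrt hs (by positivity)]
  simp only [hexPoint, Real.dist_eq, sq_abs, Matrix.cons_val_zero, Matrix.cons_val_one]
  have h3 : √3 ^ 2 = 3 := Real.sq_sqrt (by norm_num)
  calc s ^ 2 ≤ (s / 2) ^ 2 * ((((2 * p.2 + p.1 % 2 : ℕ) : ℝ) - (2 * q.2 + q.1 % 2 : ℕ)) ^ 2
      + 3 * ((p.1 : ℝ) - q.1) ^ 2) := by nlinarith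
    _ = _ := by linear_combination (-(s / 2) ^ 2 * ((p.1 : ℝ) - q.1) ^ 2) * h3

lemma hexPoint_apply_mem_Icc {a s L : ℝ} (hs : 0 ≤ s) {p : ℕ × ℕ} (h₁ : s * p.2 + s / 2 ≤ L)
    (h₂ : s / 2 * √3 * p.1 ≤ L) (j : Fin 2) : hexPoint a s p j ∈ Set.Icc a (a + L) := by
  have hmod : ((p.1 % 2 : ℕ) : ℝ) ≤ 1 := by exact_mod_cast Nat.le_of_lt_succ (Nat.mod_lt _ two_pos)
  fin_cases j
  · simp only [hexPoint, Fin.zero_eta, Fin.isValue, Matrix.cons_val_zero, Set.mem_Icc]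
    push_cast
    constructor <;> nlinarith [Nat.cast_nonneg (α := ℝ) p.2, Nat.cast_nonneg (α := ℝ) (p.1 % 2)]
  · simp only [hexPoint, Fin.mk_one, Fin.isValue, Matrix.cons_val_one, Matrix.cons_val_zero,
      Set.mem_Icc]
    have : 0 ≤ s / 2 * √3 * p.1 := by positivity
    constructor <;> linarith

lemma exists_hexPacking (a : ℝ) {L s : ℝ} (hs : 0 < s) (hsL : s / 2 ≤ L) :
    ∃ C : Finset (EuclideanSpace ℝ (Fin 2)), 2 * L * (L - s / 2) ≤ √3 * s ^ 2 * C.card ∧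
      (∀ c ∈ C, ∀ j, c j ∈ Set.Icc a (a + L)) ∧
      (C : Set (EuclideanSpace ℝ (Fin 2))).Pairwise fun c c' => s ≤ dist c c' := by
  have hh : 0 < s / 2 * √3 := by positivity
  set R := ⌊L / (s / 2 * √3)⌋₊ + 1
  set M := ⌊(L - s / 2) / s⌋₊ + 1
  have hR : L < s / 2 * √3 * R := by
    have := Nat.lt_floor_add_one (L / (s / 2 * √3))
    rw [div_lt_iff₀ hh] at this
    push_cast [R]; linarith
  have hM : L - s / 2 < s * M := by
    have := Nat.lt_floor_add_one ((L - s / 2) / s)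
    rw [div_lt_iff₀ hs] at this
    push_cast [M]; linarith
  have hinj : Set.InjOn (hexPoint a s) ↑(Finset.range R ×ˢ Finset.range M) :=
    fun p _ q _ hpq => by_contra fun hne => by
      have := le_dist_hexPoint a hs.le hne
      rw [hpq, dist_self] at this
      linarith
  refine ⟨(Finset.range R ×ˢ Finset.range M).image (hexPoint a s), ?_, ?_, ?_⟩
  · rw [Finset.card_image_of_injOn hinj, Finset.card_product, Finset.card_range,
      Finset.card_range, Nat.cast_mul]
    nlinarith
  · simp only [Finset.mem_image, Finset.mem_product, Finset.mem_range]
    rintro _ ⟨p, ⟨hp₁, hp₂⟩, rfl⟩ j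
    refine hexPoint_apply_mem_Icc hs.le ?_ ?_ j
    · have := (Nat.le_floor_iff (div_nonneg (by linarith) hs.le)).mp (Nat.lt_succ_iff.mp hp₂)
      rw [le_div_iff₀ hs] at this
      linarith
    · have := (Nat.le_floor_iff (div_nonneg (by linarith) hh.le)).mp (Nat.lt_succ_iff.mp hp₁)
      rw [le_div_iff₀ hh] at this
      linarith
  · simp only [Finset.coe_image]
    rintro _ ⟨p, -, rfl⟩ _ ⟨q, -, rfl⟩ hne
    exact le_dist_hexPoint a hs.le (ne_of_apply_ne _ hne)

lemma exists_separated_centers {k : ℕ} (hk : 3 * 10 ^ 5 ≤ k) :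
    ∃ C : Finset (EuclideanSpace ℝ (Fin 2)), C.card = k ∧
      (∀ c ∈ C, ∀ j, c j ∈ Set.Icc (0.0026 / √k) (1 - 0.0026 / √k)) ∧
      (C : Set (EuclideanSpace ℝ (Fin 2))).Pairwise fun c c' => 1.073 / √k ≤ dist c c' := by
  have hq : 547 ≤ √k := (Real.le_sqrt (by norm_num) (Nat.cast_nonneg k)).mpr
    (by norm_num; exact_mod_cast (by omega : 547 ^ 2 ≤ k))
  set e := (√k)⁻¹ with he_def
  have he₀ : 0 < e := by positivity
  have he : e ≤ 1 / 547 := by rw [he_def, one_div]; exact inv_anti₀ (by norm_num) hq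
  have hek : e ^ 2 * k = 1 := by
    rw [he_def, inv_pow, Real.sq_sqrt (Nat.cast_nonneg k), inv_mul_cancel₀]
    exact_mod_cast (by omega : k ≠ 0)
  simp only [div_eq_mul_inv, ← he_def]
  obtain ⟨C, hcard, hC, hsep⟩ := exists_hexPacking (0.0026 * e) (L := 1 - 2 * (0.0026 * e))
    (s := 1.073 * e) (by positivity) (by linarith)
  have hkC : k ≤ C.card := by
    have h3 : √3 ≤ 1.7321 := (Real.sqrt_le_left (by norm_num)).mpr (by norm_num)
    have hA : 1.998 ≤ 2 * (1 - 2 * (0.0026 * e)) * (1 - 2 * (0.0026 * e) - 1.073 * e / 2) := by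
      nlinarith
    have : 1.998 * (k : ℝ) ≤ 1.7321 * 1.073 ^ 2 * C.card := calc
      1.998 * (k : ℝ) ≤ √3 * (1.073 * e) ^ 2 * C.card * k := by nlinarith
      _ = √3 * 1.073 ^ 2 * C.card := by linear_combination (√3 * 1.073 ^ 2 * C.card) * hek
      _ ≤ 1.7321 * 1.073 ^ 2 * C.card := by gcongr
    exact_mod_cast (by nlinarith : (k : ℝ) ≤ C.card)
  obtain ⟨C', hC'C, hC'⟩ := Finset.exists_subset_card_eq hkC
  refine ⟨C', hC', fun c hc j => ?_, hsep.mono hC'C⟩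
  convert hC c (hC'C hc) j using 2
  ring

lemma dispersion_const_le :
    (0.995 : ℝ) ^ ((3 : ℝ) / 2) * √3 * ((4 : ℝ) / 27) ^ ((1 : ℝ) / 4) ≤ 1.0678 := by
  have h₁ : ((0.995 : ℝ) ^ ((3 : ℝ) / 2)) ^ 4 = 0.995 ^ 6 := by
    rw [← Real.rpow_mul_natCast (by norm_num)]; norm_num
  have h₂ : √3 ^ 4 = 9 := by
    rw [show 4 = 2 * 2 from rfl, pow_mul, sq_sqrt (by norm_num)]; norm_num
  have h₃ : (((4 : ℝ) / 27) ^ ((1 : ℝ) / 4)) ^ 4 = 4 / 27 := by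
    rw [← Real.rpow_mul_natCast (by norm_num)]; norm_num
  rw [← pow_le_pow_iff_left₀ (by positivity) (by norm_num) four_ne_zero, mul_pow, mul_pow,
    h₁, h₂, h₃]
  norm_num

lemma le_and_two_log_le_of_le_div_log {n k : ℕ} (hn : 3 ≤ n) (hk : 0 < k)
    (hkn : (k : ℝ) ≤ n / (10 ^ 5 * Real.log n)) :
    k ≤ n ∧ 2 * Real.log n ≤ n * (π * (0.0026 / √k) ^ 2) := by
  have hlog : 1 ≤ Real.log n := by
    rw [Real.le_log_iff_exp_le (by positivity)]
    have : (3 : ℝ) ≤ n := by exact_mod_cast hn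
    linarith [Real.exp_one_lt_d9]
  have hk' : (0 : ℝ) < k := by exact_mod_cast hk
  rw [le_div_iff₀ (by positivity)] at hkn
  refine ⟨by exact_mod_cast (by nlinarith : (k : ℝ) ≤ n), ?_⟩
  rw [div_pow, Real.sq_sqrt hk'.le]
  have := Real.pi_gt_three
  calc 2 * Real.log n ≤ π * 0.0026 ^ 2 * (10 ^ 5 * Real.log n) := by nlinarith
    _ ≤ π * 0.0026 ^ 2 * (n / k) := by
      gcongr
      rw [le_div_iff₀ hk']; linarith
    _ = n * (π * (0.0026 ^ 2 / k)) := by ring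

theorem random_points_contain_dispersed_subset :
    ∃ N₀ : ℕ, ∀ n : ℕ, N₀ ≤ n → ∀ k : ℕ, 3 * 10 ^ 5 ≤ k →
      (k : ℝ) ≤ (n : ℝ) / (10 ^ 5 * Real.log n) →
      1 - 1 / (n : ℝ≥0∞) ≤
        (Measure.pi fun _ : Fin n => unifSquare)
          {X : Fin n → EuclideanSpace ℝ (Fin 2) |
            ∃ s : Finset (Fin n), s.card = k ∧
              ∀ i ∈ s, ∀ j ∈ s, i ≠ j → X i ≠ X j ∧
                (0.995 : ℝ) ^ ((3 : ℝ) / 2) * Real.sqrt 3 * ((4 : ℝ) / 27) ^ ((1 : ℝ) / 4) /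
                    Real.sqrt k ≤ dist (X i) (X j)} := by
  refine ⟨3, fun n hn k hk hkn => ?_⟩
  have hq : 0 < √k := Real.sqrt_pos.mpr (by exact_mod_cast (by omega : 0 < k))
  obtain ⟨C, hCk, hC, hCsep⟩ := exists_separated_centers hk
  obtain ⟨hkn', hlog⟩ := le_and_two_log_le_of_le_div_log hn (by omega) hkn
  have hr₁ : π * (0.0026 / √k) ^ 2 ≤ 1 := by
    have : (3 * 10 ^ 5 : ℝ) ≤ k := by exact_mod_cast hk
    rw [div_pow, Real.sq_sqrt (Nat.cast_nonneg k), mul_div_assoc', div_le_one (by linarith)]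
    nlinarith [Real.pi_le_four]
  refine (one_sub_inv_le_unifSquare_pi_forall_exists_mem_ball (by positivity) hC
    (hCk ▸ hkn') hr₁ hlog).trans (measure_mono fun X hX => ?_)
  obtain ⟨S, hS, hSsep⟩ := exists_card_eq_pairwise_sub_lt_dist hCsep
    (by rw [← mul_div_assoc, div_le_div_iff_of_pos_right hq]; norm_num) hX
  refine ⟨S, hS.trans hCk, fun i hi j hj hij => ?_⟩
  have hconst : (0.995 : ℝ) ^ ((3 : ℝ) / 2) * √3 * ((4 : ℝ) / 27) ^ ((1 : ℝ) / 4) / √k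
      ≤ 1.073 / √k - 2 * (0.0026 / √k) := by
    rw [← mul_div_assoc, ← sub_div]
    gcongr
    linarith [dispersion_const_le]
  have hd := hconst.trans (hSsep hi hj hij).le
  exact ⟨dist_pos.mp ((by positivity : (0 : ℝ) < _).trans_le hd), hd⟩
end
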